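/- (Difference of consecutive local averages.) Assume ℓ ≥ 2. For every φ : ℤ/kℤ → ℝ, Σ_{i∈ℤ/kℤ} Σ_{j=1}^{ℓ−1} (a(i,j+1) − a(i,j))² ≤ (112/9) · |φ|_Γ². -/

import Mathlib

open Real Finset

noncomputable section

/-- The cycle distance on `ℤ/kℤ`. -/
def cycDist (k : ℕ) (p q : ZMod k) : ℕ := min (p - q).val (q - p).val

/-- The boundary seminorm squared, summed over unordered pairs of distinct elements. -/
def bSemiSq (k : ℕ) [NeZero k] (φ : ZMod k → ℝ) : ℝ :=
  (1 / 2) * ∑ p : ZMod k, ∑ q : ZMod k,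
    if p ≠ q then (φ p - φ q) ^ 2 / (cycDist k p q : ℝ) ^ 2 else 0

/-- The local average `a(i,j) = (1/(2j−1)) Σ_{h=−(j−1)}^{j−1} φ(i+h)`. -/
def localAvg (k : ℕ) (φ : ZMod k → ℝ) (i : ZMod k) (j : ℕ) : ℝ :=
  (1 / (2 * (j : ℝ) - 1)) * ∑ h ∈ Finset.Icc (-(j : ℤ) + 1) ((j : ℤ) - 1), φ (i + (h : ZMod k))

/-!
Writing `D m = ∑ p, (φ (p + m) - φ p) ^ 2`, the difference `a(i,j+1) - a(i,j)` is
`2 / ((2j+1)(2j-1))` times the sum over `|h| < j` of the deviations of `φ (i + h)` from the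
midpoint of `φ (i + j)` and `φ (i - j)`. Cauchy–Schwarz and summation over `i` bound the `j`-th
term by `w j * ∑_{m < 2j} D m` with `w j = 4 / ((2j+1)² (2j-1))`. Since
`w j ≤ (2j-1)⁻² - (2j+1)⁻²`, the weights collected by `D m` telescope to at most `m⁻²`, and
`∑_m D m / m² ≤ 2 |φ|_Γ²` because `d(p, p + m) = m` as long as `2m < k`. This gives the
inequality with the constant `2 ≤ 112/9`.
-/

section ShiftEnergy

variable {G : Type*} [AddCommGroup G] [Fintype G]

def shiftEnergy (φ : G → ℝ) (a : G) : ℝ :=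
  ∑ p, (φ (p + a) - φ p) ^ 2

lemma shiftEnergy_nonneg (φ : G → ℝ) (a : G) : 0 ≤ shiftEnergy φ a := by
  unfold shiftEnergy; positivity

lemma sum_sq_sub_add_eq_shiftEnergy (φ : G → ℝ) (a b : G) :
    ∑ i, (φ (i + a) - φ (i + b)) ^ 2 = shiftEnergy φ (a - b) :=
  Fintype.sum_equiv (Equiv.addRight b) _ _ fun i => by
    simp only [Equiv.coe_addRight, add_assoc, add_sub_cancel]

end ShiftEnergy

lemma cycDist_add_left {k : ℕ} (p a : ZMod k) : cycDist k p (p + a) = cycDist k 0 a := by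
  simp [cycDist]

section BoundarySeminorm

variable {k : ℕ} [NeZero k]

lemma cycDist_zero_natCast {m : ℕ} (hm : 2 * m < k) : cycDist k 0 m = m := by
  rw [cycDist, zero_sub, sub_zero, ZMod.neg_val, ZMod.val_natCast_of_lt (by omega)]
  split_ifs with h
  · rw [ZMod.natCast_eq_zero_iff] at h
    simp [Nat.eq_zero_of_dvd_of_lt h (by omega)]
  · omega

lemma bSemiSq_nonneg (φ : ZMod k → ℝ) : 0 ≤ bSemiSq k φ := by
  unfold bSemiSq; positivity

lemma two_mul_bSemiSq_eq (φ : ZMod k → ℝ) :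
    2 * bSemiSq k φ =
      ∑ a : ZMod k, if a ≠ 0 then shiftEnergy φ a / (cycDist k 0 a : ℝ) ^ 2 else 0 := by
  have hshift (p : ZMod k) :
      (∑ q, if p ≠ q then (φ p - φ q) ^ 2 / (cycDist k p q : ℝ) ^ 2 else 0) =
        ∑ a, if a ≠ 0 then (φ (p + a) - φ p) ^ 2 / (cycDist k 0 a : ℝ) ^ 2 else 0 := by
    refine (Fintype.sum_equiv (Equiv.addLeft p) _ _ fun a => ?_).symm
    simp only [Equiv.coe_addLeft, ne_eq, left_eq_add, cycDist_add_left, sub_sq_comm (φ p)]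
  rw [bSemiSq, ← mul_assoc, show (2 : ℝ) * (1 / 2) = 1 by norm_num, one_mul,
    Finset.sum_congr rfl fun p _ => hshift p, Finset.sum_comm]
  refine Finset.sum_congr rfl fun a _ => ?_
  split_ifs
  · rw [shiftEnergy, Finset.sum_div]
  · simp

lemma sum_Icc_shiftEnergy_div_sq_le (φ : ZMod k → ℝ) {M : ℕ} (hM : 2 * M < k) :
    ∑ m ∈ Icc 1 M, shiftEnergy φ (m : ZMod k) / (m : ℝ) ^ 2 ≤ 2 * bSemiSq k φ := by
  have hinj : Set.InjOn (fun m : ℕ => (m : ZMod k)) (Icc 1 M) := fun m hm n hn h => by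
    simp only [coe_Icc, Set.mem_Icc] at hm hn
    simpa [ZMod.val_natCast_of_lt (show m < k by omega),
      ZMod.val_natCast_of_lt (show n < k by omega)] using congrArg ZMod.val h
  rw [two_mul_bSemiSq_eq]
  calc ∑ m ∈ Icc 1 M, shiftEnergy φ (m : ZMod k) / (m : ℝ) ^ 2
      = ∑ a ∈ (Icc 1 M).image (fun m : ℕ => (m : ZMod k)),
          if a ≠ 0 then shiftEnergy φ a / (cycDist k 0 a : ℝ) ^ 2 else 0 := by
        rw [Finset.sum_image hinj]
        refine Finset.sum_congr rfl fun m hm => ?_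
        rw [Finset.mem_Icc] at hm
        rw [if_pos, cycDist_zero_natCast (by omega)]
        rw [ne_eq, ZMod.natCast_eq_zero_iff]
        exact Nat.not_dvd_of_pos_of_lt (by omega) (by omega)
    _ ≤ _ := Finset.sum_le_sum_of_subset_of_nonneg (Finset.subset_univ _) fun a _ _ => by
        split_ifs
        · exact div_nonneg (shiftEnergy_nonneg φ a) (sq_nonneg _)
        · exact le_rfl

end BoundarySeminorm

lemma sq_sum_midpoint_sub_le {ι : Type*} (s : Finset ι) (f : ι → ℝ) (x y : ℝ) :
    (∑ h ∈ s, ((x + y) / 2 - f h)) ^ 2 ≤ #s * ∑ h ∈ s, ((x - f h) ^ 2 + (y - f h) ^ 2) / 2 := by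
  refine (sq_sum_le_card_mul_sum_sq ..).trans ?_
  gcongr with h
  nlinarith [sq_nonneg (x - y)]

lemma card_Icc_symm (j : ℕ) (hj : 1 ≤ j) :
    (#(Icc (-(j : ℤ) + 1) (j - 1)) : ℝ) = 2 * j - 1 := by
  rw [Int.card_Icc, show ((j : ℤ) - 1 + 1 - (-j + 1)).toNat = 2 * j - 1 by omega]
  push_cast [show 1 ≤ 2 * j by omega]
  ring

lemma sum_Icc_symm_succ (j : ℕ) (hj : 1 ≤ j) (f : ℤ → ℝ) :
    ∑ h ∈ Icc (-((j + 1 : ℕ) : ℤ) + 1) ((j + 1 : ℕ) - 1), f h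
      = f j + f (-j) + ∑ h ∈ Icc (-(j : ℤ) + 1) (j - 1), f h := by
  have hIcc : Icc (-((j + 1 : ℕ) : ℤ) + 1) ((j + 1 : ℕ) - 1)
      = insert (j : ℤ) (insert (-(j : ℤ)) (Icc (-(j : ℤ) + 1) (j - 1))) := by
    ext x; simp only [Finset.mem_Icc, Finset.mem_insert]; omega
  rw [hIcc, Finset.sum_insert (by simp only [Finset.mem_insert, Finset.mem_Icc]; omega),
    Finset.sum_insert (by simp only [Finset.mem_Icc]; omega), add_assoc]

lemma sum_Icc_symm_reindex (j : ℕ) (f : ℤ → ℝ) :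
    ∑ h ∈ Icc (-(j : ℤ) + 1) (j - 1), (f (j - h) + f (h + j))
      = 2 * ∑ m ∈ Icc 1 (2 * j - 1), f m := by
  have hsub : ∑ h ∈ Icc (-(j : ℤ) + 1) (j - 1), f (j - h) = ∑ m ∈ Icc 1 (2 * j - 1), f m := by
    refine Finset.sum_nbij' (fun h => (j - h).toNat) (fun m => j - m) ?_ ?_ ?_ ?_ ?_ <;>
      intro _ h <;> simp only [Finset.mem_Icc] at h ⊢ <;> try omega
    rw [Int.toNat_of_nonneg (by omega)]
  have hadd : ∑ h ∈ Icc (-(j : ℤ) + 1) (j - 1), f (h + j)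
      = ∑ h ∈ Icc (-(j : ℤ) + 1) (j - 1), f (j - h) := by
    refine Finset.sum_nbij' (fun h => -h) (fun h => -h) ?_ ?_ ?_ ?_ ?_ <;>
      intro _ h <;> simp only [Finset.mem_Icc] at h ⊢ <;> try omega
    ring_nf
  rw [Finset.sum_add_distrib, hadd, hsub]
  ring

section LocalAverage

variable {k : ℕ}

lemma localAvg_succ_sub (φ : ZMod k → ℝ) (i : ZMod k) {j : ℕ} (hj : 1 ≤ j) :
    localAvg k φ i (j + 1) - localAvg k φ i j
      = 2 / ((2 * j + 1) * (2 * j - 1)) *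
          ∑ h ∈ Icc (-(j : ℤ) + 1) (j - 1), ((φ (i + j) + φ (i - j)) / 2 - φ (i + h)) := by
  have hj' : (1 : ℝ) ≤ j := by exact_mod_cast hj
  have hpos : (0 : ℝ) < 2 * j - 1 := by linarith
  have hpos' : (0 : ℝ) < 2 * j + 1 := by linarith
  rw [localAvg, localAvg, sum_Icc_symm_succ j hj, Finset.sum_sub_distrib, Finset.sum_const,
    nsmul_eq_mul, card_Icc_symm j hj]
  push_cast
  rw [← sub_eq_add_neg, show 2 * ((j : ℝ) + 1) - 1 = 2 * j + 1 by ring]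
  field_simp
  ring

lemma sq_localAvg_succ_sub_le (φ : ZMod k → ℝ) (i : ZMod k) {j : ℕ} (hj : 1 ≤ j) :
    (localAvg k φ i (j + 1) - localAvg k φ i j) ^ 2
      ≤ 2 / ((2 * j + 1) ^ 2 * (2 * j - 1)) *
          ∑ h ∈ Icc (-(j : ℤ) + 1) (j - 1),
            ((φ (i + j) - φ (i + h)) ^ 2 + (φ (i - j) - φ (i + h)) ^ 2) := by
  have hj' : (1 : ℝ) ≤ j := by exact_mod_cast hj
  have hpos : (0 : ℝ) < 2 * j - 1 := by linarith
  have hCS := sq_sum_midpoint_sub_le (Icc (-(j : ℤ) + 1) (j - 1)) (fun h => φ (i + h))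
    (φ (i + j)) (φ (i - j))
  rw [card_Icc_symm j hj] at hCS
  rw [localAvg_succ_sub φ i hj, mul_pow]
  calc _ ≤ ((2 : ℝ) / ((2 * j + 1) * (2 * j - 1))) ^ 2 *
        ((2 * j - 1) * ∑ h ∈ Icc (-(j : ℤ) + 1) (j - 1),
          ((φ (i + j) - φ (i + h)) ^ 2 + (φ (i - j) - φ (i + h)) ^ 2) / 2) := by gcongr
    _ = _ := by
      rw [← Finset.sum_div]
      field_simp

def avgDiffWeight (j : ℕ) : ℝ := 4 / ((2 * j + 1) ^ 2 * (2 * j - 1))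

lemma sum_sq_localAvg_succ_sub_le [NeZero k] (φ : ZMod k → ℝ) {j : ℕ} (hj : 1 ≤ j) :
    ∑ i, (localAvg k φ i (j + 1) - localAvg k φ i j) ^ 2
      ≤ avgDiffWeight j * ∑ m ∈ Icc 1 (2 * j - 1), shiftEnergy φ (m : ZMod k) := by
  have hshift (h : ℤ) : ∑ i, ((φ (i + j) - φ (i + h)) ^ 2 + (φ (i - j) - φ (i + h)) ^ 2)
      = shiftEnergy φ (((j - h : ℤ)) : ZMod k) + shiftEnergy φ (((h + j : ℤ)) : ZMod k) := by
    simp_rw [Finset.sum_add_distrib, sub_sq_comm (φ (_ - _)), sub_eq_add_neg _ (j : ZMod k),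
      sum_sq_sub_add_eq_shiftEnergy]
    push_cast
    ring_nf
  calc _ ≤ ∑ i, 2 / ((2 * j + 1) ^ 2 * (2 * j - 1)) * ∑ h ∈ Icc (-(j : ℤ) + 1) (j - 1),
            ((φ (i + j) - φ (i + h)) ^ 2 + (φ (i - j) - φ (i + h)) ^ 2) :=
        Finset.sum_le_sum fun i _ => sq_localAvg_succ_sub_le φ i hj
    _ = _ := by
      rw [← Finset.mul_sum, Finset.sum_comm, Finset.sum_congr rfl fun h _ => hshift h,
        sum_Icc_symm_reindex j (fun t => shiftEnergy φ (t : ZMod k)), avgDiffWeight]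
      push_cast
      ring

end LocalAverage

lemma avgDiffWeight_le_sub (j : ℕ) (hj : 1 ≤ j) :
    avgDiffWeight j ≤ 1 / (2 * (j : ℝ) - 1) ^ 2 - 1 / (2 * ((j + 1 : ℕ) : ℝ) - 1) ^ 2 := by
  have hj' : (1 : ℝ) ≤ j := by exact_mod_cast hj
  have hpos : (0 : ℝ) < 2 * j - 1 := by linarith
  push_cast
  rw [avgDiffWeight, show 2 * ((j : ℝ) + 1) - 1 = 2 * j + 1 by ring,
    div_sub_div _ _ (by positivity) (by positivity),
    div_le_div_iff₀ (by positivity) (by positivity)]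
  nlinarith [mul_pos hpos hpos]

lemma sum_Icc_avgDiffWeight_le (a L : ℕ) (ha : 1 ≤ a) :
    ∑ j ∈ Icc a L, avgDiffWeight j ≤ 1 / (2 * (a : ℝ) - 1) ^ 2 := by
  set g : ℕ → ℝ := fun j => 1 / (2 * (j : ℝ) - 1) ^ 2
  rcases lt_or_ge L a with hLa | haL
  · rw [Finset.Icc_eq_empty_of_lt hLa, Finset.sum_empty]
    positivity
  calc _ ≤ ∑ j ∈ Icc a L, (g j - g (j + 1)) :=
        Finset.sum_le_sum fun j hj => avgDiffWeight_le_sub j (by simp at hj; omega)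
    _ = g a - g (L + 1) := by
      have htelescope := Finset.sum_Icc_sub haL g
      rw [Finset.sum_sub_distrib] at htelescope ⊢
      linarith
    _ ≤ g a := sub_le_self _ (by positivity)

lemma sum_Icc_half_avgDiffWeight_le (m L : ℕ) (hm : 1 ≤ m) :
    ∑ j ∈ Icc (m / 2 + 1) L, avgDiffWeight j ≤ 1 / (m : ℝ) ^ 2 := by
  refine (sum_Icc_avgDiffWeight_le _ L (by omega)).trans ?_
  have hm' : (m : ℝ) ≤ 2 * ((m / 2 + 1 : ℕ) : ℝ) - 1 := by
    have := (Nat.cast_le (α := ℝ)).mpr (show m + 1 ≤ 2 * (m / 2 + 1) by omega)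
    push_cast at this ⊢
    linarith
  gcongr

theorem consecutive_local_average_difference_general (k ℓ : ℕ) [NeZero k]
    (h1 : 4 * ℓ < k)
    (φ : ZMod k → ℝ) :
    ∑ i : ZMod k, ∑ j ∈ Finset.Icc 1 (ℓ - 1),
      (localAvg k φ i (j + 1) - localAvg k φ i j) ^ 2
      ≤ (112 / 9) * bSemiSq k φ := by
  calc _ = ∑ j ∈ Icc 1 (ℓ - 1), ∑ i, (localAvg k φ i (j + 1) - localAvg k φ i j) ^ 2 :=
        Finset.sum_comm
    _ ≤ ∑ j ∈ Icc 1 (ℓ - 1),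
          avgDiffWeight j * ∑ m ∈ Icc 1 (2 * j - 1), shiftEnergy φ (m : ZMod k) :=
        Finset.sum_le_sum fun j hj => sum_sq_localAvg_succ_sub_le φ (Finset.mem_Icc.mp hj).1
    _ = ∑ m ∈ Icc 1 (2 * (ℓ - 1) - 1),
          (∑ j ∈ Icc (m / 2 + 1) (ℓ - 1), avgDiffWeight j) * shiftEnergy φ (m : ZMod k) := by
        simp_rw [Finset.mul_sum, Finset.sum_mul]
        exact Finset.sum_comm' fun j m => by simp only [Finset.mem_Icc]; omega
    _ ≤ ∑ m ∈ Icc 1 (2 * (ℓ - 1) - 1), shiftEnergy φ (m : ZMod k) / (m : ℝ) ^ 2 :=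
        Finset.sum_le_sum fun m hm => by
          rw [div_eq_mul_one_div, mul_comm (shiftEnergy _ _)]
          exact mul_le_mul_of_nonneg_right
            (sum_Icc_half_avgDiffWeight_le m _ (Finset.mem_Icc.mp hm).1) (shiftEnergy_nonneg φ _)
    _ ≤ 2 * bSemiSq k φ := sum_Icc_shiftEnergy_div_sq_le φ (by omega)
    _ ≤ (112 / 9) * bSemiSq k φ := by linarith [bSemiSq_nonneg φ]

/-- Difference of consecutive local averages: assuming `ℓ ≥ 2`,
for every `φ : ℤ/kℤ → ℝ`,
`Σ_{i∈ℤ/kℤ} Σ_{j=1}^{ℓ−1} (a(i,j+1) − a(i,j))² ≤ (112/9) · |φ|_Γ²`. -/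
theorem consecutive_local_average_difference (k ℓ c : ℕ) [NeZero k]
    (h1 : 4 * ℓ < k) (h2 : k < 2 * c * ℓ) (hℓ : 2 ≤ ℓ)
    (φ : ZMod k → ℝ) :
    ∑ i : ZMod k, ∑ j ∈ Finset.Icc 1 (ℓ - 1),
      (localAvg k φ i (j + 1) - localAvg k φ i j) ^ 2
      ≤ (112 / 9) * bSemiSq k φ :=
  consecutive_local_average_difference_general k ℓ h1 φ
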